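/- Let (R,M) be a discrete valuation domain with finite residue field and valuation v, let S ⊆ R be a balanced set with n = |S|, and let A be the partition matrix of the partition C_S associated to S. Then there exists a uniquely determined vector (m_s)_{s∈S} of positive integers with gcd(m_s : s ∈ S) = 1 such that A·(m_s)_{s∈S} = e·(1,…,1)^T for some non-negative integer e. Moreover, if (k_s)_{s∈S} is any vector of positive integers with A·(k_s)_{s∈S} = ẽ·(1,…,1)^T for some non-negative integer ẽ, then there is a positive integer ℓ with k_s = ℓ·m_s for all s ∈ S and ẽ = ℓ·e. -/

import Mathlib

open Polynomial

section Defs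

variable (R K : Type*)

/-- `Int(R) = {F ∈ K[x] ∣ F(R) ⊆ R}`, the ring of integer-valued polynomials,
as a subring of `K[x]`. -/
def intPoly [CommRing R] [CommRing K] [Algebra R K] : Subring (Polynomial K) where
  carrier := {F | ∀ r : R, ∃ a : R, F.eval (algebraMap R K r) = algebraMap R K a}
  mul_mem' := by
    rintro f g hf hg r
    obtain ⟨a, ha⟩ := hf r
    obtain ⟨b, hb⟩ := hg r
    exact ⟨a * b, by simp [ha, hb]⟩
  one_mem' := fun r => ⟨1, by simp⟩
  add_mem' := by
    rintro f g hf hg r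
    obtain ⟨a, ha⟩ := hf r
    obtain ⟨b, hb⟩ := hg r
    exact ⟨a + b, by simp [ha, hb]⟩
  zero_mem' := fun r => ⟨0, by simp⟩
  neg_mem' := by
    rintro f hf r
    obtain ⟨a, ha⟩ := hf r
    exact ⟨-a, by simp [ha]⟩

/-- Polynomials with coefficients in `R` are integer-valued. -/
theorem map_mem_intPoly [CommRing R] [CommRing K] [Algebra R K] (f : Polynomial R) :
    f.map (algebraMap R K) ∈ intPoly R K :=
  fun r => ⟨f.eval r, by rw [Polynomial.eval_map, Polynomial.eval₂_at_apply]⟩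

/-- An element `d` of a commutative monoid is absolutely irreducible if it is irreducible
and, for every `n ≥ 1`, the only factorization of `d ^ n` into irreducibles is, up to order
and unit factors, `d ⋯ d` (`n` copies). -/
def AbsolutelyIrreducible {α : Type*} [CommMonoid α] (d : α) : Prop :=
  Irreducible d ∧ ∀ n : ℕ, 1 ≤ n → ∀ l : Multiset α, (∀ a ∈ l, Irreducible a) →
    l.prod = d ^ n → Multiset.card l = n ∧ ∀ a ∈ l, Associated a d

/-- The fixed divisor of a polynomial `f ∈ R[x]`: the ideal of `R` generated by the
values of `f` on `R`. -/
def fixDiv [CommRing R] (f : Polynomial R) : Ideal R :=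
  Ideal.span (Set.range fun a => f.eval a)

/-- The fixed divisor of an integer-valued polynomial `F ∈ Int(R)`: the ideal of `R`
generated by (the elements of `R` representing) the values of `F` on `R`. -/
def fixDivK [CommRing R] [CommRing K] [Algebra R K] (F : Polynomial K) : Ideal R :=
  Ideal.span {a : R | ∃ r : R, F.eval (algebraMap R K r) = algebraMap R K a}

/-- The (normalized additive) valuation of a nonzero element of a discrete valuation
ring: the largest `n` such that `x ∈ M ^ n`, where `M` is the maximal ideal. -/
noncomputable def mval [CommRing R] [IsLocalRing R] (x : R) : ℕ :=
  sSup {n : ℕ | x ∈ IsLocalRing.maximalIdeal R ^ n}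

open scoped Classical in
/-- The valuation `v : R → ℕ∞`, with `v 0 = ⊤`. -/
noncomputable def vR [CommRing R] [IsLocalRing R] (x : R) : ℕ∞ :=
  if x = 0 then ⊤ else (mval R x : ℕ∞)

open scoped Classical in
/-- The valuation extended to the quotient field `K`, with `v 0 = ⊤`. -/
noncomputable def vK [CommRing R] [IsLocalRing R] [CommRing K] [Algebra R K]
    [IsLocalization (nonZeroDivisors R) K] (x : K) : WithTop ℤ :=
  if x = 0 then ⊤
  else (((mval R (IsLocalization.sec (nonZeroDivisors R) x).1 : ℤ) -
        (mval R ((IsLocalization.sec (nonZeroDivisors R) x).2 : R) : ℤ) : ℤ) : WithTop ℤ)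

/-- The residue class `s + M ^ n` of `s` modulo the `n`-th power of the maximal ideal. -/
def resClass [CommRing R] [IsLocalRing R] (s : R) (n : ℕ) : Set R :=
  {x | x - s ∈ IsLocalRing.maximalIdeal R ^ n}

/-- A finite set `S ⊆ R` is balanced if, letting `n s` for each `s ∈ S` be the minimal
non-negative integer with `(s + M ^ (n s)) ∩ S = {s}`, the residue classes `s + M ^ (n s)`
(`s ∈ S`) are pairwise disjoint and cover `R`. -/
def IsBalanced [CommRing R] [IsLocalRing R] (S : Finset R) : Prop :=
  S.Nonempty ∧
  ∃ n : R → ℕ,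
    (∀ s ∈ S, resClass R s (n s) ∩ (S : Set R) = {s} ∧
      ∀ k : ℕ, resClass R s k ∩ (S : Set R) = {s} → n s ≤ k) ∧
    (∀ s ∈ S, ∀ t ∈ S, s ≠ t → Disjoint (resClass R s (n s)) (resClass R t (n t))) ∧
    (⋃ s ∈ S, resClass R s (n s)) = Set.univ

/-- `ρ` describes the `M`-adic partition `C_S` associated to `S`: the partition of `R`
into the residue classes `s + M ^ (ρ s)`, `s ∈ S`, such that each block contains both a
residue class of `M ^ (ρ s + 1)` intersecting `S` and one disjoint from `S`. -/
def IsSPartition [CommRing R] [IsLocalRing R] (S : Finset R) (ρ : R → ℕ) : Prop :=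
  (⋃ s ∈ S, resClass R s (ρ s)) = Set.univ ∧
  (∀ s ∈ S, ∀ t ∈ S,
    resClass R s (ρ s) = resClass R t (ρ t) ∨
      Disjoint (resClass R s (ρ s)) (resClass R t (ρ t))) ∧
  (∀ s ∈ S,
    (∃ u : R, resClass R u (ρ s + 1) ⊆ resClass R s (ρ s) ∧
      (resClass R u (ρ s + 1) ∩ (S : Set R)).Nonempty) ∧
    (∃ u : R, resClass R u (ρ s + 1) ⊆ resClass R s (ρ s) ∧
      resClass R u (ρ s + 1) ∩ (S : Set R) = ∅))

/-- `S'` is a balanced set associated to `S` (relative to the partition data `ρ` of `C_S`):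
`S' ⊆ S` is balanced, consists of one representative per block of `C_S`, and its associated
partition `C_{S'}` coincides with `C_S`. -/
def IsAssociatedBalancedSubset [CommRing R] [IsLocalRing R] (S S' : Finset R) (ρ : R → ℕ) :
    Prop :=
  S' ⊆ S ∧ IsBalanced R S' ∧
  (∀ s ∈ S', ∀ t ∈ S', s ≠ t → Disjoint (resClass R s (ρ s)) (resClass R t (ρ t))) ∧
  (⋃ s ∈ S', resClass R s (ρ s)) = Set.univ

open scoped Classical in
/-- The partition matrix of the partition `{s + M ^ (ρ s) : s ∈ S}`: diagonal entries
`ρ s`, off-diagonal entries `v (s - t)`. -/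
noncomputable def partitionMatrix [CommRing R] [IsLocalRing R] (S : Finset R) (ρ : R → ℕ) :
    Matrix {x // x ∈ S} {x // x ∈ S} ℤ :=
  Matrix.of fun s t =>
    if (s : R) = (t : R) then (ρ (s : R) : ℤ) else (mval R ((s : R) - (t : R)) : ℤ)

/-- `m` is the vector of multiplicities of the equalizing polynomial of `S`: the unique
vector of positive integers with gcd `1` such that `A · m = e · (1, …, 1)ᵀ` for some
non-negative integer `e`, where `A` is the partition matrix. -/
def IsEqualizingVector [CommRing R] [IsLocalRing R] (S : Finset R) (ρ : R → ℕ) (m : R → ℕ) :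
    Prop :=
  (∀ s ∈ S, 0 < m s) ∧ S.gcd m = 1 ∧
  ∃ e : ℕ, ∀ s : {x // x ∈ S},
    (∑ t : {x // x ∈ S}, partitionMatrix R S ρ s t * (m (t : R) : ℤ)) = (e : ℤ)

/-- `f` is the equalizing polynomial of `S`. -/
def IsEqualizingPoly [CommRing R] [IsLocalRing R] (S : Finset R) (f : Polynomial R) : Prop :=
  ∃ (ρ : R → ℕ) (m : R → ℕ), IsSPartition R S ρ ∧ IsEqualizingVector R S ρ m ∧
    f = ∏ s ∈ S, (Polynomial.X - Polynomial.C s) ^ m s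

/-- The posh set of `f ∈ R[x]`: the set of `r ∈ R` where `v (f r)` exceeds
`min_{t ∈ R} v (f t)`. -/
noncomputable def poshR [CommRing R] [IsLocalRing R] (f : Polynomial R) : Set R :=
  {r : R | (⨅ t : R, vR R (f.eval t)) < vR R (f.eval r)}

/-- The posh set of `F ∈ K[x]`: the set of `r ∈ R` where `v (F r)` exceeds
`min_{t ∈ R} v (F t)`. -/
def poshK [CommRing R] [IsLocalRing R] [CommRing K] [Algebra R K]
    [IsLocalization (nonZeroDivisors R) K] (F : Polynomial K) : Set R :=
  {r : R | ∃ t : R, vK R K (F.eval (algebraMap R K t)) < vK R K (F.eval (algebraMap R K r))}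

/-- `r` lies in an `S`-poor neighborhood of the partition `C_S` (described by `ρ`):
a residue class `r + M ^ (ρ s + 1)` disjoint from `S` inside a block `s + M ^ (ρ s)`. -/
def IsPoorElt [CommRing R] [IsLocalRing R] (S : Finset R) (ρ : R → ℕ) (r : R) : Prop :=
  ∃ s ∈ S, r ∈ resClass R s (ρ s) ∧ resClass R r (ρ s + 1) ∩ (S : Set R) = ∅

/-- The rich set of `S`: the union of the `S`-rich neighborhoods `s + M ^ (ρ s + 1)`,
`s ∈ S`. -/
def richSet [CommRing R] [IsLocalRing R] (S : Finset R) (ρ : R → ℕ) : Set R :=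
  ⋃ s ∈ S, resClass R s (ρ s + 1)

/-- `a` is an `M`-ordering (`P`-ordering) of `R`. -/
def IsMOrdering [CommRing R] [IsLocalRing R] (a : ℕ → R) : Prop :=
  ∀ k : ℕ, ∀ x : R,
    vR R (∏ i ∈ Finset.range k, (a k - a i)) ≤ vR R (∏ i ∈ Finset.range k, (x - a i))

end Defs

/-!
For `|S| ≥ 2` the partition matrix is *strictly ultrametric*: symmetric, nonnegative,
`A r t ≥ min (A r s) (A s t)`, and every diagonal entry exceeds the rest of its row; the last
point, `v (s - t) < ρ s`, is where balancedness enters. If `μ` is the least off-diagonal entry of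
such a matrix, `μ < A s t` is an equivalence relation with at least two classes, `A = μ` between
different classes, and `A - μ` is again strictly ultrametric on each class. Induction on the size
then produces a positive `x` with `A x = 1` and shows that every solution of `A y = c · 1` is
`c x`. Clearing the denominators of `x` and dividing by the gcd gives `m`.
-/

open Finset

structure IsStrictlyUltrametricOn {ι 𝕜 : Type*} [Zero 𝕜] [LinearOrder 𝕜]
    (A : ι → ι → 𝕜) (T : Finset ι) : Prop where
  symm : ∀ s ∈ T, ∀ t ∈ T, A s t = A t s
  nonneg : ∀ s ∈ T, ∀ t ∈ T, 0 ≤ A s t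
  min_le : ∀ r ∈ T, ∀ s ∈ T, ∀ t ∈ T, min (A r s) (A s t) ≤ A r t
  lt_diag : ∀ s ∈ T, ∀ t ∈ T, s ≠ t → A s t < A s s
  diag_pos : ∀ s ∈ T, 0 < A s s

def ultrametricBlock {ι 𝕜 : Type*} [LinearOrder 𝕜] (A : ι → ι → 𝕜) (T : Finset ι) (μ : 𝕜)
    (s : ι) : Finset ι :=
  {t ∈ T | μ < A s t}

section UltrametricBlock

variable {ι 𝕜 : Type*} {A : ι → ι → 𝕜} {T : Finset ι} {μ : 𝕜} {s t : ι}

section LinearOrder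

variable [LinearOrder 𝕜]

theorem mem_ultrametricBlock : t ∈ ultrametricBlock A T μ s ↔ t ∈ T ∧ μ < A s t :=
  mem_filter

theorem ultrametricBlock_subset : ultrametricBlock A T μ s ⊆ T :=
  filter_subset _ _

theorem le_of_isLeast_offDiag (hμ : IsLeast ((fun p : ι × ι => A p.1 p.2) '' T.offDiag) μ)
    (hs : s ∈ T) (ht : t ∈ T) (hst : s ≠ t) : μ ≤ A s t :=
  hμ.2 ⟨(s, t), mem_offDiag.2 ⟨hs, ht, hst⟩, rfl⟩

variable [Zero 𝕜]

theorem IsStrictlyUltrametricOn.ultrametricBlock_eq (hA : IsStrictlyUltrametricOn A T)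
    (hs : s ∈ T) (ht : t ∈ ultrametricBlock A T μ s) :
    ultrametricBlock A T μ t = ultrametricBlock A T μ s := by
  rw [mem_ultrametricBlock] at ht
  ext u
  simp only [mem_ultrametricBlock, and_congr_right_iff]
  intro hu
  constructor
  · exact fun htu => (lt_min ht.2 htu).trans_le (hA.min_le s hs t ht.1 u hu)
  · intro hsu
    rw [hA.symm s hs t ht.1] at ht
    exact (lt_min ht.2 hsu).trans_le (hA.min_le t ht.1 s hs u hu)

theorem IsStrictlyUltrametricOn.lt_of_mem_ultrametricBlock (hA : IsStrictlyUltrametricOn A T)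
    (hs : s ∈ T) {i j : ι} (hi : i ∈ ultrametricBlock A T μ s)
    (hj : j ∈ ultrametricBlock A T μ s) : μ < A i j := by
  rw [← hA.ultrametricBlock_eq hs hi, mem_ultrametricBlock] at hj
  exact hj.2

theorem IsStrictlyUltrametricOn.mem_ultrametricBlock_self (hA : IsStrictlyUltrametricOn A T)
    (hμ : IsLeast ((fun p : ι × ι => A p.1 p.2) '' T.offDiag) μ) (hs : s ∈ T) :
    s ∈ ultrametricBlock A T μ s := by
  obtain ⟨⟨p, q⟩, hpq, -⟩ := hμ.1
  obtain ⟨hp, hq, hpq⟩ := mem_offDiag.1 hpq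
  obtain ⟨t, ht, hst⟩ : ∃ t ∈ T, s ≠ t := by
    by_cases hsp : s = p
    · exact ⟨q, hq, hsp ▸ hpq⟩
    · exact ⟨p, hp, hsp⟩
  exact mem_ultrametricBlock.2
    ⟨hs, (le_of_isLeast_offDiag hμ hs ht hst).trans_lt (hA.lt_diag s hs t ht hst)⟩

theorem IsStrictlyUltrametricOn.eq_of_notMem_ultrametricBlock (hA : IsStrictlyUltrametricOn A T)
    (hμ : IsLeast ((fun p : ι × ι => A p.1 p.2) '' T.offDiag) μ) (hs : s ∈ T) (ht : t ∈ T)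
    (hst : t ∉ ultrametricBlock A T μ s) : A s t = μ := by
  have hne : s ≠ t := by
    rintro rfl
    exact hst (hA.mem_ultrametricBlock_self hμ hs)
  rw [mem_ultrametricBlock, not_and, not_lt] at hst
  exact (hst ht).antisymm (le_of_isLeast_offDiag hμ hs ht hne)

theorem IsStrictlyUltrametricOn.ultrametricBlock_ssubset (hA : IsStrictlyUltrametricOn A T)
    (hμ : IsLeast ((fun p : ι × ι => A p.1 p.2) '' T.offDiag) μ) (hs : s ∈ T) :
    ultrametricBlock A T μ s ⊂ T := by
  obtain ⟨⟨p, q⟩, hpq, rfl⟩ := hμ.1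
  obtain ⟨hp, hq, -⟩ := mem_offDiag.1 hpq
  rw [ssubset_iff_of_subset ultrametricBlock_subset]
  by_cases hps : p ∈ ultrametricBlock A T (A p q) s
  · exact ⟨q, hq, fun hqs => (hA.lt_of_mem_ultrametricBlock hs hps hqs).false⟩
  · exact ⟨p, hp, hps⟩

end LinearOrder

theorem IsStrictlyUltrametricOn.sub_ultrametricBlock [AddCommGroup 𝕜] [LinearOrder 𝕜]
    [IsOrderedAddMonoid 𝕜] (hA : IsStrictlyUltrametricOn A T) (hs : s ∈ T) :
    IsStrictlyUltrametricOn (fun i j => A i j - μ) (ultrametricBlock A T μ s) where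
  symm i hi j hj := by
    rw [hA.symm i (ultrametricBlock_subset hi) j (ultrametricBlock_subset hj)]
  nonneg i hi j hj := sub_nonneg.2 (hA.lt_of_mem_ultrametricBlock hs hi hj).le
  min_le r hr u hu t ht := by
    rw [min_sub_sub_right]
    exact sub_le_sub_right (hA.min_le r (ultrametricBlock_subset hr) u
      (ultrametricBlock_subset hu) t (ultrametricBlock_subset ht)) μ
  lt_diag i hi j hj hij := sub_lt_sub_right (hA.lt_diag i (ultrametricBlock_subset hi) j
    (ultrametricBlock_subset hj) hij) μ
  diag_pos i hi := sub_pos.2 (hA.lt_of_mem_ultrametricBlock hs hi hi)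

theorem IsStrictlyUltrametricOn.sum_mul_eq_add_sum_ultrametricBlock [CommRing 𝕜] [LinearOrder 𝕜]
    (hA : IsStrictlyUltrametricOn A T)
    (hμ : IsLeast ((fun p : ι × ι => A p.1 p.2) '' T.offDiag) μ) (hs : s ∈ T) (y : ι → 𝕜) :
    ∑ t ∈ T, A s t * y t =
      μ * ∑ t ∈ T, y t + ∑ t ∈ ultrametricBlock A T μ s, (A s t - μ) * y t := by
  have hblock : ∑ t ∈ ultrametricBlock A T μ s, (A s t - μ) * y t =
      ∑ t ∈ T, (A s t - μ) * y t :=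
    sum_subset ultrametricBlock_subset fun t ht hts => by
      rw [hA.eq_of_notMem_ultrametricBlock hμ hs ht hts, sub_self, zero_mul]
  rw [hblock, mul_sum, ← sum_add_distrib]
  exact sum_congr rfl fun t _ => by ring

end UltrametricBlock

structure IsNormalizedEqualizer {ι 𝕜 : Type*} [Field 𝕜] [LinearOrder 𝕜]
    (A : ι → ι → 𝕜) (T : Finset ι) (x : ι → 𝕜) : Prop where
  pos : ∀ s ∈ T, 0 < x s
  sum_mul_eq_one : ∀ s ∈ T, ∑ t ∈ T, A s t * x t = 1
  eq_mul_of_sum_mul_eq : ∀ (y : ι → 𝕜) (c : 𝕜), (∀ s ∈ T, ∑ t ∈ T, A s t * y t = c) →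
    ∀ s ∈ T, y s = c * x s

section NormalizedEqualizer

variable {ι 𝕜 : Type*} [Field 𝕜] [LinearOrder 𝕜] {A : ι → ι → 𝕜} {T : Finset ι}

theorem IsNormalizedEqualizer.eq {x y : ι → 𝕜} (hx : IsNormalizedEqualizer A T x)
    (hy : IsNormalizedEqualizer A T y) : ∀ s ∈ T, y s = x s := by
  simpa using hx.eq_mul_of_sum_mul_eq y 1 hy.sum_mul_eq_one

-- `X t = X s` on the block of `s` when `t` is in it, by uniqueness of the block's equalizer
theorem IsStrictlyUltrametricOn.sum_ultrametricBlock_mul_diag_eq_one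
    (hA : IsStrictlyUltrametricOn A T) {μ : 𝕜}
    (hμ : IsLeast ((fun p : ι × ι => A p.1 p.2) '' T.offDiag) μ) {X : ι → ι → 𝕜}
    (hX : ∀ s ∈ T,
      IsNormalizedEqualizer (fun i j => A i j - μ) (ultrametricBlock A T μ s) (X s))
    {s : ι} (hs : s ∈ T) : ∑ t ∈ ultrametricBlock A T μ s, (A s t - μ) * X t t = 1 := by
  rw [← (hX s hs).sum_mul_eq_one s (hA.mem_ultrametricBlock_self hμ hs)]
  refine sum_congr rfl fun t ht => ?_
  have hXt := hX t (ultrametricBlock_subset ht)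
  rw [hA.ultrametricBlock_eq hs ht] at hXt
  rw [(hX s hs).eq hXt t ht]

variable [IsStrictOrderedRing 𝕜]

theorem isNormalizedEqualizer_singleton {a : ι} (ha : 0 < A a a) :
    IsNormalizedEqualizer A {a} fun _ => (A a a)⁻¹ where
  pos := by simpa using ha
  sum_mul_eq_one := by simp [ha.ne']
  eq_mul_of_sum_mul_eq y c hy := by
    simp only [mem_singleton, forall_eq, sum_singleton] at hy ⊢
    rw [← hy]
    field_simp

end NormalizedEqualizer

section Equalizer

variable {ι 𝕜 : Type*} [Field 𝕜] [LinearOrder 𝕜] [IsStrictOrderedRing 𝕜] {A : ι → ι → 𝕜}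
  {T : Finset ι}

theorem IsStrictlyUltrametricOn.isNormalizedEqualizer_of_ultrametricBlock
    (hA : IsStrictlyUltrametricOn A T) {μ : 𝕜}
    (hμ : IsLeast ((fun p : ι × ι => A p.1 p.2) '' T.offDiag) μ) {X : ι → ι → 𝕜}
    (hX : ∀ s ∈ T,
      IsNormalizedEqualizer (fun i j => A i j - μ) (ultrametricBlock A T μ s) (X s)) :
    IsNormalizedEqualizer A T fun t => X t t / (1 + μ * ∑ u ∈ T, X u u) := by
  have hself : ∀ s ∈ T, s ∈ ultrametricBlock A T μ s :=
    fun s hs => hA.mem_ultrametricBlock_self hμ hs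
  have hXpos : ∀ t ∈ T, 0 < X t t := fun t ht => (hX t ht).pos t (hself t ht)
  have hμ0 : 0 ≤ μ := by
    obtain ⟨⟨p, q⟩, hpq, rfl⟩ := hμ.1
    obtain ⟨hp, hq, -⟩ := mem_offDiag.1 hpq
    exact hA.nonneg p hp q hq
  set N := 1 + μ * ∑ u ∈ T, X u u
  have hN : 0 < N := add_pos_of_pos_of_nonneg one_pos
    (mul_nonneg hμ0 (sum_nonneg fun t ht => (hXpos t ht).le))
  have hrow : ∀ s ∈ T, ∑ t ∈ T, A s t * X t t = N := fun s hs => by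
    rw [hA.sum_mul_eq_add_sum_ultrametricBlock hμ hs,
      hA.sum_ultrametricBlock_mul_diag_eq_one hμ hX hs, add_comm]
  refine ⟨fun t ht => div_pos (hXpos t ht) hN, fun s hs => ?_, fun y c hy => ?_⟩
  · simp_rw [mul_div_assoc', ← sum_div, hrow s hs, div_self hN.ne']
  obtain ⟨d, hd⟩ : ∃ d, d = c - μ * ∑ u ∈ T, y u := ⟨_, rfl⟩
  have hyX : ∀ s ∈ T, y s = d * X s s := by
    intro s hs
    refine (hX s hs).eq_mul_of_sum_mul_eq y d (fun r hr => ?_) s (hself s hs)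
    have hrT := ultrametricBlock_subset hr
    have hsplit := hA.sum_mul_eq_add_sum_ultrametricBlock hμ hrT y
    rw [← hA.ultrametricBlock_eq hs hr]
    linarith [hy r hrT]
  have hsum : ∑ u ∈ T, y u = d * ∑ u ∈ T, X u u := by
    rw [mul_sum]
    exact sum_congr rfl hyX
  have hc : c = d * N := by linear_combination μ * hsum - hd
  intro s hs
  rw [hyX s hs, hc]
  field_simp

theorem IsStrictlyUltrametricOn.exists_isNormalizedEqualizer (hA : IsStrictlyUltrametricOn A T) :
    ∃ x, IsNormalizedEqualizer A T x := by
  induction T using Finset.strongInduction generalizing A with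
  | H T ih =>
  obtain rfl | hne := T.eq_empty_or_nonempty
  · exact ⟨fun _ => 1, by simp, by simp, by simp⟩
  obtain ⟨a, rfl⟩ | ⟨a, ha, b, hb, hab⟩ := hne.exists_eq_singleton_or_nontrivial
  · exact ⟨_, isNormalizedEqualizer_singleton (hA.diag_pos a (mem_singleton_self a))⟩
  obtain ⟨p, hp, hmin⟩ := T.offDiag.exists_min_image (fun p => A p.1 p.2)
    ⟨(a, b), mem_offDiag.2 ⟨ha, hb, hab⟩⟩
  have hμ : IsLeast ((fun p : ι × ι => A p.1 p.2) '' T.offDiag) (A p.1 p.2) :=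
    ⟨⟨p, hp, rfl⟩, by rintro _ ⟨q, hq, rfl⟩; exact hmin q hq⟩
  choose! X hX using fun s (hs : s ∈ T) =>
    ih _ (hA.ultrametricBlock_ssubset hμ hs) (hA.sub_ultrametricBlock hs)
  exact ⟨_, hA.isNormalizedEqualizer_of_ultrametricBlock hμ hX⟩

end Equalizer

section Primitive

variable {ι : Type*} {T : Finset ι}

theorem eq_gcd_mul_of_mul_eq_mul {k m : ι → ℕ} {a b : ℕ} (ha : 0 < a) (hm : T.gcd m = 1)
    (h : ∀ s ∈ T, a * k s = b * m s) : b = T.gcd k * a ∧ ∀ s ∈ T, k s = T.gcd k * m s := by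
  have hgcd : a * T.gcd k = b * T.gcd m := by
    simpa only [Finset.gcd_mul_left, normalize_eq] using gcd_congr rfl h
  rw [hm, mul_one] at hgcd
  refine ⟨by rw [← hgcd, mul_comm], fun s hs => Nat.eq_of_mul_eq_mul_left ha ?_⟩
  rw [h s hs, ← hgcd, mul_assoc]

theorem exists_nat_eq_mul_of_pos {x : ι → ℚ} (hx : ∀ s ∈ T, 0 < x s) :
    ∃ D : ℕ, 0 < D ∧ ∀ s ∈ T, ∃ w : ℕ, (w : ℚ) = D * x s := by
  refine ⟨∏ s ∈ T, (x s).den, prod_pos fun s _ => (x s).den_pos, fun s hs => ?_⟩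
  obtain ⟨D', hD'⟩ := dvd_prod_of_mem (fun s => (x s).den) hs
  have hnum : ((x s).num.toNat : ℚ) = (x s).num := by
    exact_mod_cast Int.toNat_of_nonneg (Rat.num_nonneg.2 (hx s hs).le)
  refine ⟨D' * (x s).num.toNat, ?_⟩
  rw [hD', Nat.cast_mul, Nat.cast_mul, hnum, ← Rat.mul_den_eq_num]
  ring

theorem exists_gcd_eq_one_of_pos (hT : T.Nonempty) {x : ι → ℚ} (hx : ∀ s ∈ T, 0 < x s) :
    ∃ (c : ℚ) (m : ι → ℕ), 0 < c ∧ T.gcd m = 1 ∧ ∀ s ∈ T, (m s : ℚ) = c * x s := by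
  obtain ⟨D, hD, hw⟩ := exists_nat_eq_mul_of_pos hx
  choose! w hw using hw
  obtain ⟨m, hwm, hm⟩ := extract_gcd w hT
  obtain ⟨s₀, hs₀⟩ := hT
  have hg : 0 < T.gcd w := by
    refine Nat.pos_of_ne_zero fun h => (mul_pos (Nat.cast_pos.2 hD) (hx s₀ hs₀)).ne' ?_
    rw [← hw s₀ hs₀, gcd_eq_zero_iff.1 h s₀ hs₀, Nat.cast_zero]
  refine ⟨D / T.gcd w, m, by positivity, hm, fun s hs => ?_⟩
  rw [div_mul_eq_mul_div, ← hw s hs, hwm s hs, Nat.cast_mul]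
  field_simp

end Primitive

structure IsPrimitiveSolution {ι : Type*} (A : ι → ι → ℕ) (T : Finset ι) (m : ι → ℕ) (e : ℕ) :
    Prop where
  pos : ∀ s ∈ T, 0 < m s
  gcd_eq_one : T.gcd m = 1
  sum_mul_eq : ∀ s ∈ T, ∑ t ∈ T, A s t * m t = e
  eq_gcd_mul : ∀ (k : ι → ℕ) (e' : ℕ), (∀ s ∈ T, 0 < k s) →
    (∀ s ∈ T, ∑ t ∈ T, A s t * k t = e') → e' = T.gcd k * e ∧ ∀ s ∈ T, k s = T.gcd k * m s

section PrimitiveSolution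

variable {ι : Type*} {A : ι → ι → ℕ} {T : Finset ι}

theorem isPrimitiveSolution_singleton (a : ι) : IsPrimitiveSolution A {a} 1 (A a a) where
  pos := by simp
  gcd_eq_one := by simp
  sum_mul_eq := by simp
  eq_gcd_mul k e' _ hk := by
    simp only [mem_singleton, forall_eq, sum_singleton, gcd_singleton, normalize_eq] at hk ⊢
    exact ⟨by rw [← hk, mul_comm], (mul_one _).symm⟩

theorem IsStrictlyUltrametricOn.exists_isPrimitiveSolution
    (hA : IsStrictlyUltrametricOn (fun s t => (A s t : ℚ)) T) (hT : T.Nonempty) :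
    ∃ m e, IsPrimitiveSolution A T m e := by
  obtain ⟨x, hx⟩ := hA.exists_isNormalizedEqualizer
  obtain ⟨c, m, hc, hgcd, hm⟩ := exists_gcd_eq_one_of_pos hT hx.pos
  have hrow : ∀ s ∈ T, ∑ t ∈ T, (A s t : ℚ) * m t = c := fun s hs => by
    rw [sum_congr rfl fun t ht => by rw [hm t ht, mul_left_comm], ← mul_sum,
      hx.sum_mul_eq_one s hs, mul_one]
  obtain ⟨s₀, hs₀⟩ := hT
  set e := ∑ t ∈ T, A s₀ t * m t
  have hce : (e : ℚ) = c := by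
    push_cast [e]
    exact hrow s₀ hs₀
  refine ⟨m, e, fun s hs => ?_, hgcd, fun s hs => ?_, fun k e' _ hk => ?_⟩
  · exact_mod_cast (hm s hs).symm ▸ mul_pos hc (hx.pos s hs)
  · exact_mod_cast (hrow s hs).trans hce.symm
  · have hkx := hx.eq_mul_of_sum_mul_eq (fun t => k t) e' fun s hs => by exact_mod_cast hk s hs
    refine eq_gcd_mul_of_mul_eq_mul (a := e) (by exact_mod_cast hce ▸ hc) hgcd fun s hs => ?_
    have : (e * k s : ℚ) = e' * m s := by rw [hkx s hs, hm s hs, hce]; ring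
    exact_mod_cast this

end PrimitiveSolution

section ResidueClasses

variable {R : Type*} [CommRing R] [IsLocalRing R] {a b c : R} {n k : ℕ}

theorem mem_resClass : a ∈ resClass R b n ↔ a - b ∈ IsLocalRing.maximalIdeal R ^ n :=
  Iff.rfl

theorem self_mem_resClass : a ∈ resClass R a n := by
  simp [mem_resClass]

theorem mem_resClass_comm : a ∈ resClass R b n ↔ b ∈ resClass R a n := by
  rw [mem_resClass, mem_resClass, ← neg_mem_iff, neg_sub]

theorem mem_resClass_trans (hab : a ∈ resClass R b n) (hbc : b ∈ resClass R c n) :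
    a ∈ resClass R c n := by
  simpa [mem_resClass] using add_mem (mem_resClass.1 hab) (mem_resClass.1 hbc)

theorem resClass_subset_resClass (h : n ≤ k) : resClass R a k ⊆ resClass R a n :=
  fun _ hx => Ideal.pow_le_pow_right h hx

theorem mval_neg (x : R) : mval R (-x) = mval R x := by
  simp only [mval, neg_mem_iff]

theorem mval_sub_comm (x y : R) : mval R (x - y) = mval R (y - x) := by
  rw [← mval_neg, neg_sub]

end ResidueClasses

section DiscreteValuationRing

variable {R : Type*} [CommRing R] [IsDomain R] [IsDiscreteValuationRing R]

theorem mem_maximalIdeal_pow_iff_le_mval {x : R} (hx : x ≠ 0) {k : ℕ} :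
    x ∈ IsLocalRing.maximalIdeal R ^ k ↔ k ≤ mval R x := by
  obtain ⟨ϖ, hϖ⟩ := IsDiscreteValuationRing.exists_irreducible R
  obtain ⟨n, u, rfl⟩ := IsDiscreteValuationRing.eq_unit_mul_pow_irreducible hx hϖ
  have hmem : ∀ k, ↑u * ϖ ^ n ∈ IsLocalRing.maximalIdeal R ^ k ↔ k ≤ n := fun k => by
    rw [hϖ.maximalIdeal_eq, Ideal.span_singleton_pow, Ideal.mem_span_singleton,
      Units.dvd_mul_left, pow_dvd_pow_iff hϖ.ne_zero hϖ.not_isUnit]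
  have hval : mval R (↑u * ϖ ^ n) = n := by
    simp only [mval, hmem]
    exact csSup_Iic
  rw [hmem, hval]

theorem min_mval_le_mval_add {x y : R} (hx : x ≠ 0) (hy : y ≠ 0) (hxy : x + y ≠ 0) :
    min (mval R x) (mval R y) ≤ mval R (x + y) := by
  rw [← mem_maximalIdeal_pow_iff_le_mval hxy]
  exact add_mem ((mem_maximalIdeal_pow_iff_le_mval hx).2 (min_le_left _ _))
    ((mem_maximalIdeal_pow_iff_le_mval hy).2 (min_le_right _ _))

variable {S : Finset R} {ρ : R → ℕ}

theorem mval_sub_lt_of_isBalanced (hS : IsBalanced R S) (hρ : IsSPartition R S ρ) {s t : R}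
    (hs : s ∈ S) (ht : t ∈ S) (hst : s ≠ t) : mval R (s - t) < ρ s := by
  obtain ⟨-, n, hn, -, hcover⟩ := hS
  obtain ⟨u, hu, hpoor⟩ := (hρ.2.2 s hs).2
  by_contra! hle
  have htS : t ∈ resClass R s (ρ s) :=
    (mem_maximalIdeal_pow_iff_le_mval (sub_ne_zero.2 hst.symm)).2 (mval_sub_comm s t ▸ hle)
  have hlt : ρ s < n s := by
    by_contra! h
    have : t ∈ resClass R s (n s) ∩ S := ⟨resClass_subset_resClass h htS, ht⟩
    rw [(hn s hs).1] at this
    exact hst this.symm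
  obtain ⟨s', hs', hus'⟩ : ∃ s' ∈ S, u ∈ resClass R s' (n s') := by
    simpa using (hcover ▸ Set.mem_univ u : u ∈ ⋃ s ∈ S, resClass R s (n s))
  -- otherwise `s'` would lie in the `S`-free class `u + M ^ (ρ s + 1)`
  have hn' : n s' ≤ ρ s := by
    by_contra! h
    have : s' ∈ resClass R u (ρ s + 1) ∩ S :=
      ⟨mem_resClass_comm.1 (resClass_subset_resClass h hus'), hs'⟩
    exact (hpoor ▸ this : s' ∈ (∅ : Set R))
  have hss' : s ∈ resClass R s' (n s') ∩ S :=
    ⟨mem_resClass_trans (resClass_subset_resClass hn'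
      (mem_resClass_comm.1 (hu self_mem_resClass))) hus', hs⟩
  rw [(hn s' hs').1, Set.mem_singleton_iff] at hss'
  subst hss'
  omega

end DiscreteValuationRing

-- the entries of `partitionMatrix R S ρ`, with rows and columns indexed by all of `R`
open scoped Classical in
noncomputable def partitionEntry {R : Type*} [CommRing R] [IsLocalRing R] (ρ : R → ℕ)
    (s t : R) : ℕ :=
  if s = t then ρ s else mval R (s - t)

theorem forall_sum_partitionMatrix_mul_eq_iff {R : Type*} [CommRing R] [IsLocalRing R]
    {S : Finset R} {ρ : R → ℕ} (k : R → ℕ) (e : ℕ) :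
    (∀ s : {x // x ∈ S}, ∑ t : {x // x ∈ S}, partitionMatrix R S ρ s t * (k t : ℤ) = e) ↔
      ∀ s ∈ S, ∑ t ∈ S, partitionEntry ρ s t * k t = e := by
  have hentry : ∀ s t : {x // x ∈ S}, partitionMatrix R S ρ s t = partitionEntry ρ s t := by
    intro s t
    simp only [partitionMatrix, partitionEntry, Matrix.of_apply]
    split_ifs <;> rfl
  simp only [hentry, ← Nat.cast_mul, ← Nat.cast_sum, Nat.cast_inj, Subtype.forall]
  exact forall₂_congr fun s _ => by rw [sum_coe_sort S fun t => partitionEntry ρ s t * k t]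

section PartitionMatrix

variable {R : Type*} [CommRing R] [IsDomain R] [IsDiscreteValuationRing R] {S : Finset R}
  {ρ : R → ℕ}

theorem min_partitionEntry_le (hS : IsBalanced R S) (hρ : IsSPartition R S ρ) {r s t : R}
    (hr : r ∈ S) (hs : s ∈ S) :
    min (partitionEntry ρ r s) (partitionEntry ρ s t) ≤ partitionEntry ρ r t := by
  rcases eq_or_ne r s with rfl | hrs
  · simp [partitionEntry]
  rcases eq_or_ne s t with rfl | hst
  · simp [partitionEntry]
  rcases eq_or_ne r t with rfl | hrt
  · simp only [partitionEntry, if_neg hrs]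
    exact min_le_of_left_le (mval_sub_lt_of_isBalanced hS hρ hr hs hrs).le
  · simp only [partitionEntry, if_neg hrs, if_neg hst, if_neg hrt]
    simpa using min_mval_le_mval_add (sub_ne_zero.2 hrs) (sub_ne_zero.2 hst)
      (by simpa using sub_ne_zero.2 hrt)

theorem isStrictlyUltrametricOn_partitionEntry (hS : IsBalanced R S) (hρ : IsSPartition R S ρ)
    (hnt : S.Nontrivial) : IsStrictlyUltrametricOn (fun s t => (partitionEntry ρ s t : ℚ)) S where
  symm s _ t _ := by
    by_cases h : s = t
    · rw [h]
    · simp [partitionEntry, h, Ne.symm h, mval_sub_comm s t]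
  nonneg _ _ _ _ := Nat.cast_nonneg _
  min_le r hr s hs t _ := by exact_mod_cast min_partitionEntry_le hS hρ hr hs
  lt_diag s hs t ht hst := by
    simpa [partitionEntry, hst] using mval_sub_lt_of_isBalanced hS hρ hs ht hst
  diag_pos s hs := by
    obtain ⟨t, ht, hts⟩ := hnt.exists_ne s
    simpa [partitionEntry] using (mval_sub_lt_of_isBalanced hS hρ hs ht hts.symm).pos

end PartitionMatrix

theorem statement19_general (R : Type*) [CommRing R] [IsDomain R] [IsDiscreteValuationRing R]
    (S : Finset R) (hS : IsBalanced R S)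
    (ρ : R → ℕ) (hρ : IsSPartition R S ρ) :
    ∃ (m : R → ℕ) (e : ℕ),
      (∀ s ∈ S, 0 < m s) ∧ S.gcd m = 1 ∧
      (∀ s : {x // x ∈ S},
        (∑ t : {x // x ∈ S}, partitionMatrix R S ρ s t * (m (t : R) : ℤ)) = (e : ℤ)) ∧
      (∀ (m' : R → ℕ) (e' : ℕ), (∀ s ∈ S, 0 < m' s) → S.gcd m' = 1 →
        (∀ s : {x // x ∈ S},
          (∑ t : {x // x ∈ S}, partitionMatrix R S ρ s t * (m' (t : R) : ℤ)) = (e' : ℤ)) →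
        ∀ s ∈ S, m' s = m s) ∧
      (∀ (k : R → ℕ) (e' : ℕ), (∀ s ∈ S, 0 < k s) →
        (∀ s : {x // x ∈ S},
          (∑ t : {x // x ∈ S}, partitionMatrix R S ρ s t * (k (t : R) : ℤ)) = (e' : ℤ)) →
        ∃ l : ℕ, 0 < l ∧ (∀ s ∈ S, k s = l * m s) ∧ e' = l * e) := by
  obtain ⟨m, e, hm⟩ : ∃ m e, IsPrimitiveSolution (partitionEntry ρ) S m e := by
    obtain ⟨a, rfl⟩ | hnt := hS.1.exists_eq_singleton_or_nontrivial
    · exact ⟨1, _, isPrimitiveSolution_singleton a⟩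
    · exact (isStrictlyUltrametricOn_partitionEntry hS hρ hnt).exists_isPrimitiveSolution hS.1
  refine ⟨m, e, hm.pos, hm.gcd_eq_one,
    (forall_sum_partitionMatrix_mul_eq_iff m e).2 hm.sum_mul_eq, ?_, ?_⟩
  · intro m' e' hpos hgcd hsum s hs
    obtain ⟨-, h⟩ :=
      hm.eq_gcd_mul m' e' hpos ((forall_sum_partitionMatrix_mul_eq_iff m' e').1 hsum)
    rw [h s hs, hgcd, one_mul]
  · intro k e' hpos hsum
    obtain ⟨he', hk⟩ :=
      hm.eq_gcd_mul k e' hpos ((forall_sum_partitionMatrix_mul_eq_iff k e').1 hsum)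
    obtain ⟨s₀, hs₀⟩ := hS.1
    exact ⟨S.gcd k, Nat.pos_of_ne_zero fun h => (hpos s₀ hs₀).ne' (gcd_eq_zero_iff.1 h s₀ hs₀),
      hk, he'⟩

/-- For a balanced set `S` with partition matrix `A` there is a uniquely
determined vector `(m s)_{s ∈ S}` of positive integers with gcd `1` such that
`A · m = e · (1,…,1)ᵀ` for some non-negative integer `e`; moreover every positive integer
solution `(k s)` of `A · k = ẽ · (1,…,1)ᵀ` satisfies `k = ℓ · m` and `ẽ = ℓ · e` for some
positive integer `ℓ`. -/
theorem statement19 (R : Type*) [CommRing R] [IsDomain R] [IsDiscreteValuationRing R]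
    [Finite (IsLocalRing.ResidueField R)]
    (S : Finset R) (hS : IsBalanced R S)
    (ρ : R → ℕ) (hρ : IsSPartition R S ρ) :
    ∃ (m : R → ℕ) (e : ℕ),
      (∀ s ∈ S, 0 < m s) ∧ S.gcd m = 1 ∧
      (∀ s : {x // x ∈ S},
        (∑ t : {x // x ∈ S}, partitionMatrix R S ρ s t * (m (t : R) : ℤ)) = (e : ℤ)) ∧
      (∀ (m' : R → ℕ) (e' : ℕ), (∀ s ∈ S, 0 < m' s) → S.gcd m' = 1 →
        (∀ s : {x // x ∈ S},
          (∑ t : {x // x ∈ S}, partitionMatrix R S ρ s t * (m' (t : R) : ℤ)) = (e' : ℤ)) →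
        ∀ s ∈ S, m' s = m s) ∧
      (∀ (k : R → ℕ) (e' : ℕ), (∀ s ∈ S, 0 < k s) →
        (∀ s : {x // x ∈ S},
          (∑ t : {x // x ∈ S}, partitionMatrix R S ρ s t * (k (t : R) : ℤ)) = (e' : ℤ)) →
        ∃ l : ℕ, 0 < l ∧ (∀ s ∈ S, k s = l * m s) ∧ e' = l * e) :=
  statement19_general R S hS ρ hρ
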